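/- Define the 8×8 matrix u over T = k[x,y,z] with rows (x, 0, z³, y², 0, yz², 0, 0), (0, x, −y, z², z, 0, 0, 0), (z², −y², −x, 0, 0, 0, 0, yz), (y, z³, 0, −x, 0, 0, z², 0), (0, 0, 0, 0, −x, 0, −z³, y²), (0, 0, 0, 0, 0, −x, −y, −z²), (0, 0, 0, 0, −z², −y², x, 0), (0, 0, 0, 0, y, −z³, 0, x). Then u·u = (x² + y³ + z⁵)·I₈, i.e., (u,u) is a symmetric matrix factorization of x² + y³ + z⁵. -/
import Mathlib


open MvPolynomial

/-- Symmetric matrix factorization of x^2+y^3+z^5 representing the rank-four bundle F_4 of weight type (2,3,5). -/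
noncomputable def uF4_235 (k : Type*) [Field k] :
    Matrix (Fin 8) (Fin 8) (MvPolynomial (Fin 3) k) :=
  let x : MvPolynomial (Fin 3) k := X 0
  let y : MvPolynomial (Fin 3) k := X 1
  let z : MvPolynomial (Fin 3) k := X 2
  !![x, 0, z ^ 3, y ^ 2, 0, y * z ^ 2, 0, 0;
     0, x, -y, z ^ 2, z, 0, 0, 0;
     z ^ 2, -y ^ 2, -x, 0, 0, 0, 0, y * z;
     y, z ^ 3, 0, -x, 0, 0, z ^ 2, 0;
     0, 0, 0, 0, -x, 0, -z ^ 3, y ^ 2;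
     0, 0, 0, 0, 0, -x, -y, -z ^ 2;
     0, 0, 0, 0, -z ^ 2, -y ^ 2, x, 0;
     0, 0, 0, 0, y, -z ^ 3, 0, x]


private theorem cv0' {α : Type*} (a0 a1 a2 a3 a4 a5 a6 a7 : α) {h : 0 < 8} :
    ![a0,a1,a2,a3,a4,a5,a6,a7] (⟨0,h⟩:Fin 8) = a0 := rfl
private theorem cv1' {α : Type*} (a0 a1 a2 a3 a4 a5 a6 a7 : α) {h : 1 < 8} :
    ![a0,a1,a2,a3,a4,a5,a6,a7] (⟨1,h⟩:Fin 8) = a1 := rfl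
private theorem cv2' {α : Type*} (a0 a1 a2 a3 a4 a5 a6 a7 : α) {h : 2 < 8} :
    ![a0,a1,a2,a3,a4,a5,a6,a7] (⟨2,h⟩:Fin 8) = a2 := rfl
private theorem cv3' {α : Type*} (a0 a1 a2 a3 a4 a5 a6 a7 : α) {h : 3 < 8} :
    ![a0,a1,a2,a3,a4,a5,a6,a7] (⟨3,h⟩:Fin 8) = a3 := rfl
private theorem cv4' {α : Type*} (a0 a1 a2 a3 a4 a5 a6 a7 : α) {h : 4 < 8} :
    ![a0,a1,a2,a3,a4,a5,a6,a7] (⟨4,h⟩:Fin 8) = a4 := rfl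
private theorem cv5' {α : Type*} (a0 a1 a2 a3 a4 a5 a6 a7 : α) {h : 5 < 8} :
    ![a0,a1,a2,a3,a4,a5,a6,a7] (⟨5,h⟩:Fin 8) = a5 := rfl
private theorem cv6' {α : Type*} (a0 a1 a2 a3 a4 a5 a6 a7 : α) {h : 6 < 8} :
    ![a0,a1,a2,a3,a4,a5,a6,a7] (⟨6,h⟩:Fin 8) = a6 := rfl
private theorem cv7' {α : Type*} (a0 a1 a2 a3 a4 a5 a6 a7 : α) {h : 7 < 8} :
    ![a0,a1,a2,a3,a4,a5,a6,a7] (⟨7,h⟩:Fin 8) = a7 := rfl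
private theorem cv0 {α : Type*} (a0 a1 a2 a3 a4 a5 a6 a7 : α) :
    ![a0,a1,a2,a3,a4,a5,a6,a7] (0:Fin 8) = a0 := rfl
private theorem cv1 {α : Type*} (a0 a1 a2 a3 a4 a5 a6 a7 : α) :
    ![a0,a1,a2,a3,a4,a5,a6,a7] (1:Fin 8) = a1 := rfl
private theorem cv2 {α : Type*} (a0 a1 a2 a3 a4 a5 a6 a7 : α) :
    ![a0,a1,a2,a3,a4,a5,a6,a7] (2:Fin 8) = a2 := rfl
private theorem cv3 {α : Type*} (a0 a1 a2 a3 a4 a5 a6 a7 : α) :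
    ![a0,a1,a2,a3,a4,a5,a6,a7] (3:Fin 8) = a3 := rfl
private theorem cv4 {α : Type*} (a0 a1 a2 a3 a4 a5 a6 a7 : α) :
    ![a0,a1,a2,a3,a4,a5,a6,a7] (4:Fin 8) = a4 := rfl
private theorem cv5 {α : Type*} (a0 a1 a2 a3 a4 a5 a6 a7 : α) :
    ![a0,a1,a2,a3,a4,a5,a6,a7] (5:Fin 8) = a5 := rfl
private theorem cv6 {α : Type*} (a0 a1 a2 a3 a4 a5 a6 a7 : α) :
    ![a0,a1,a2,a3,a4,a5,a6,a7] (6:Fin 8) = a6 := rfl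
private theorem cv7 {α : Type*} (a0 a1 a2 a3 a4 a5 a6 a7 : α) :
    ![a0,a1,a2,a3,a4,a5,a6,a7] (7:Fin 8) = a7 := rfl

set_option maxHeartbeats 2000000 in
theorem stmt_9 (k : Type*) [Field k] :
    uF4_235 k * uF4_235 k =
      ((X 0 ^ 2 + X 1 ^ 3 + X 2 ^ 5 : MvPolynomial (Fin 3) k)) •
        (1 : Matrix (Fin 8) (Fin 8) (MvPolynomial (Fin 3) k)) := by
  rw [← Matrix.ext_iff]
  intro i j
  fin_cases i <;> fin_cases j <;>
    simp only [uF4_235, Matrix.mul_apply, Fin.sum_univ_eight, Matrix.of_apply,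
      cv0, cv1, cv2, cv3, cv4, cv5, cv6, cv7,
      cv0', cv1', cv2', cv3', cv4', cv5', cv6', cv7', Matrix.smul_apply,
      Matrix.one_apply, Fin.mk.injEq, smul_eq_mul,
      mul_zero, zero_mul, add_zero, zero_add, neg_zero, mul_one] <;>
    norm_num <;> ring
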